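/- arXiv:2108.03513 — 2 statements merged into one kernel-verified Lean document; each statement's English description precedes it below -/
import Mathlib

section
/- Let p ≥ 2, ν₀, ν₁ > 0, and let A, B be symmetric real 3×3 matrices such that M(τ) = τA + (1−τ)B is nonzero for every τ ∈ [0,1]. Then, with T(A) = 2(ν₀ + ν₁ |A|_F^{p-2}) A, one has the integral identity (T(A) − T(B)) : (A − B) = 2 ∫₀¹ [ (ν₀ + ν₁ |M(τ)|_F^{p−2}) |A − B|_F² + ν₁ (p−2) |M(τ)|_F^{p−4} ((A − B) : M(τ))² ] dτ. -/
/-!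
Along the segment `M τ = τ • a + (1 - τ) • b`, which avoids `0`, the scalar function
`τ ↦ ⟪T (M τ), a - b⟫` is differentiable. Since `‖x‖ ^ (p - 2)` has derivative
`(p - 2) ‖x‖ ^ (p - 4) ⟪x, v⟫` in the direction `v`, its derivative is exactly the integrand, and
the identity is the fundamental theorem of calculus. The Frobenius inner product is the Euclidean
inner product of matrices flattened to vectors indexed by `Fin 3 × Fin 3`, so the computation
holds in any real inner product space.
-/

/-- Frobenius inner product of two real 3×3 matrices: `A : B = ∑ᵢⱼ Aᵢⱼ Bᵢⱼ`. -/
noncomputable def frobInner (A B : Matrix (Fin 3) (Fin 3) ℝ) : ℝ :=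
  ∑ i : Fin 3, ∑ j : Fin 3, A i j * B i j

/-- Frobenius norm `|A|_F = (A : A)^{1/2}`. -/
noncomputable def frobNorm (A : Matrix (Fin 3) (Fin 3) ℝ) : ℝ :=
  Real.sqrt (frobInner A A)

/-- The Ladyzhenskaya stress map `T(A) = 2 (ν₀ + ν₁ |A|_F^{p-2}) A`. -/
noncomputable def ladyT (p ν₀ ν₁ : ℝ) (A : Matrix (Fin 3) (Fin 3) ℝ) :
    Matrix (Fin 3) (Fin 3) ℝ :=
  (2 * (ν₀ + ν₁ * frobNorm A ^ (p - 2))) • A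

open Set RealInnerProductSpace

section InnerProductSpace

variable {E : Type*} [NormedAddCommGroup E] [InnerProductSpace ℝ E]

theorem HasDerivAt.norm_rpow {γ : ℝ → E} {v : E} {t : ℝ} (r : ℝ) (hγ : HasDerivAt γ v t)
    (h0 : γ t ≠ 0) :
    HasDerivAt (fun s => ‖γ s‖ ^ r) (r * ‖γ t‖ ^ (r - 2) * ⟪γ t, v⟫) t := by
  have hsq : ∀ x : E, ‖x‖ ^ r = (‖x‖ ^ 2) ^ (r / 2) := fun x => by
    rw [← Real.rpow_natCast, ← Real.rpow_mul (norm_nonneg x)]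
    ring_nf
  simp only [hsq]
  convert hγ.norm_sq.rpow_const (p := r / 2) (Or.inl (by positivity)) using 1
  rw [← Real.rpow_natCast, ← Real.rpow_mul (norm_nonneg _)]
  push_cast
  ring_nf

theorem hasDerivAt_smul_add_one_sub_smul (a b : E) (t : ℝ) :
    HasDerivAt (fun s : ℝ => s • a + (1 - s) • b) (a - b) t := by
  have h := ((hasDerivAt_id t).smul_const a).add (((hasDerivAt_id t).const_sub 1).smul_const b)
  simp only [id, one_smul, neg_smul, ← sub_eq_add_neg] at h
  exact h

noncomputable def ladyStress (p ν₀ ν₁ : ℝ) (x : E) : E :=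
  (2 * (ν₀ + ν₁ * ‖x‖ ^ (p - 2))) • x

theorem HasDerivAt.ladyStress (p ν₀ ν₁ : ℝ) {γ : ℝ → E} {v : E} {t : ℝ}
    (hγ : HasDerivAt γ v t) (h0 : γ t ≠ 0) :
    HasDerivAt (fun s => ladyStress p ν₀ ν₁ (γ s))
      ((2 * (ν₀ + ν₁ * ‖γ t‖ ^ (p - 2))) • v +
        (2 * ν₁ * (p - 2) * ‖γ t‖ ^ (p - 4) * ⟪γ t, v⟫) • γ t) t := by
  have hc := (((hγ.norm_rpow (p - 2) h0).const_mul ν₁).const_add ν₀).const_mul 2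
  refine (hc.smul hγ).congr_deriv ?_
  rw [show p - 2 - 2 = p - 4 by ring]
  module

theorem hasDerivAt_inner_ladyStress_segment (p ν₀ ν₁ : ℝ) (a b : E) {τ : ℝ}
    (h : τ • a + (1 - τ) • b ≠ 0) :
    HasDerivAt (fun s => ⟪ladyStress p ν₀ ν₁ (s • a + (1 - s) • b), a - b⟫)
      (2 * ((ν₀ + ν₁ * ‖τ • a + (1 - τ) • b‖ ^ (p - 2)) * ‖a - b‖ ^ 2 +
        ν₁ * (p - 2) * ‖τ • a + (1 - τ) • b‖ ^ (p - 4) *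
          ⟪a - b, τ • a + (1 - τ) • b⟫ ^ 2)) τ := by
  refine (((hasDerivAt_smul_add_one_sub_smul a b τ).ladyStress p ν₀ ν₁ h).inner ℝ
    (hasDerivAt_const τ (a - b))).congr_deriv ?_
  set M := τ • a + (1 - τ) • b
  simp only [inner_zero_right, zero_add, inner_add_left, real_inner_smul_left,
    real_inner_self_eq_norm_sq]
  rw [real_inner_comm (a - b)]
  ring

theorem inner_ladyStress_sub_eq_integral (p ν₀ ν₁ : ℝ) (a b : E)
    (h : ∀ τ ∈ Icc (0 : ℝ) 1, τ • a + (1 - τ) • b ≠ 0) :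
    ⟪ladyStress p ν₀ ν₁ a - ladyStress p ν₀ ν₁ b, a - b⟫ =
      2 * ∫ τ in (0 : ℝ)..1,
        ((ν₀ + ν₁ * ‖τ • a + (1 - τ) • b‖ ^ (p - 2)) * ‖a - b‖ ^ 2 +
          ν₁ * (p - 2) * ‖τ • a + (1 - τ) • b‖ ^ (p - 4) * ⟪a - b, τ • a + (1 - τ) • b⟫ ^ 2) := by
  rw [← uIcc_of_le zero_le_one] at h
  rw [← intervalIntegral.integral_const_mul, intervalIntegral.integral_eq_sub_of_hasDerivAt
    (fun τ hτ => hasDerivAt_inner_ladyStress_segment p ν₀ ν₁ a b (h τ hτ))]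
  · simp [inner_sub_left]
  · have hnorm (r : ℝ) : ContinuousOn (fun τ : ℝ => ‖τ • a + (1 - τ) • b‖ ^ r) (uIcc 0 1) :=
      (by fun_prop : Continuous fun τ : ℝ => ‖τ • a + (1 - τ) • b‖).continuousOn.rpow_const
        fun τ hτ => Or.inl (norm_ne_zero_iff.2 (h τ hτ))
    have := hnorm (p - 2)
    have := hnorm (p - 4)
    exact ContinuousOn.intervalIntegrable (by fun_prop)

end InnerProductSpace

def Matrix.flatten {m n : Type*} : Matrix m n ℝ →ₗ[ℝ] EuclideanSpace ℝ (m × n) :=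
  (WithLp.linearEquiv 2 ℝ (m × n → ℝ)).symm.toLinearMap ∘ₗ
    (LinearEquiv.curry ℝ ℝ m n).symm.toLinearMap

theorem Matrix.flatten_apply {m n : Type*} (A : Matrix m n ℝ) (i : m) (j : n) :
    A.flatten (i, j) = A i j := rfl

theorem Matrix.flatten_injective {m n : Type*} :
    Function.Injective (Matrix.flatten : Matrix m n ℝ → _) :=
  fun _ _ h => Matrix.ext fun i j => congrArg (· (i, j)) h

theorem frobInner_eq_inner (A B : Matrix (Fin 3) (Fin 3) ℝ) :
    frobInner A B = ⟪A.flatten, B.flatten⟫ := by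
  simp [frobInner, PiLp.inner_apply, Fintype.sum_prod_type, Matrix.flatten_apply, mul_comm]

theorem frobNorm_eq_norm (A : Matrix (Fin 3) (Fin 3) ℝ) : frobNorm A = ‖A.flatten‖ := by
  rw [frobNorm, frobInner_eq_inner, real_inner_self_eq_norm_sq, Real.sqrt_sq (norm_nonneg _)]

theorem flatten_ladyT (p ν₀ ν₁ : ℝ) (A : Matrix (Fin 3) (Fin 3) ℝ) :
    (ladyT p ν₀ ν₁ A).flatten = ladyStress p ν₀ ν₁ A.flatten := by
  rw [ladyT, ladyStress, map_smul, frobNorm_eq_norm]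

theorem ladyT_integral_identity_general (p ν₀ ν₁ : ℝ)
    (A B : Matrix (Fin 3) (Fin 3) ℝ)
    (hM : ∀ τ ∈ Set.Icc (0 : ℝ) 1, τ • A + (1 - τ) • B ≠ 0) :
    frobInner (ladyT p ν₀ ν₁ A - ladyT p ν₀ ν₁ B) (A - B) =
      2 * ∫ τ in (0 : ℝ)..1,
        ((ν₀ + ν₁ * frobNorm (τ • A + (1 - τ) • B) ^ (p - 2)) * frobNorm (A - B) ^ 2 +
          ν₁ * (p - 2) * frobNorm (τ • A + (1 - τ) • B) ^ (p - 4) *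
            (frobInner (A - B) (τ • A + (1 - τ) • B)) ^ 2) := by
  have hM' : ∀ τ ∈ Icc (0 : ℝ) 1, τ • A.flatten + (1 - τ) • B.flatten ≠ 0 := fun τ hτ => by
    simpa only [ne_eq, ← map_smul, ← map_add, map_eq_zero_iff _ Matrix.flatten_injective]
      using hM τ hτ
  simpa only [frobInner_eq_inner, frobNorm_eq_norm, map_sub, map_add, map_smul, flatten_ladyT]
    using inner_ladyStress_sub_eq_integral p ν₀ ν₁ A.flatten B.flatten hM'

/-- Integral identity for the Ladyzhenskaya stress: with `M(τ) = τA + (1−τ)B` nonzero on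
`[0,1]`, one has
`(T(A) − T(B)) : (A − B)
  = 2 ∫₀¹ (ν₀ + ν₁|M|_F^{p−2}) |A−B|_F² + ν₁ (p−2) |M|_F^{p−4} ((A−B) : M)² dτ`. -/
theorem ladyT_integral_identity (p ν₀ ν₁ : ℝ) (hp : 2 ≤ p) (hν₀ : 0 < ν₀) (hν₁ : 0 < ν₁)
    (A B : Matrix (Fin 3) (Fin 3) ℝ) (hA : A.IsSymm) (hB : B.IsSymm)
    (hM : ∀ τ ∈ Set.Icc (0 : ℝ) 1, τ • A + (1 - τ) • B ≠ 0) :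
    frobInner (ladyT p ν₀ ν₁ A - ladyT p ν₀ ν₁ B) (A - B) =
      2 * ∫ τ in (0 : ℝ)..1,
        ((ν₀ + ν₁ * frobNorm (τ • A + (1 - τ) • B) ^ (p - 2)) * frobNorm (A - B) ^ 2 +
          ν₁ * (p - 2) * frobNorm (τ • A + (1 - τ) • B) ^ (p - 4) *
            (frobInner (A - B) (τ • A + (1 - τ) • B)) ^ 2) :=
  ladyT_integral_identity_general p ν₀ ν₁ A B hM
end

section
/- Exponential decay from averaged coercivity: let Y : [0,∞) → [0,∞) be absolutely continuous on compact intervals and let α be locally integrable on [0,∞) with Y′(t) + α(t) Y(t) ≤ 0 for almost every t ≥ 0. Suppose there exist T > 0, β > 0, M ≥ 0 and t* ≥ 0 such that for every t ≥ t*: ∫_t^{t+T} α(s) ds ≥ β and ∫_t^{t+T} max(−α(s), 0) ds ≤ M. Then Y decays exponentially: for all t ≥ t*, Y(t) ≤ Y(t*) e^{β + M} e^{−(β/T)(t − t*)}; in particular Y(t) → 0 exponentially as t → ∞. -/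
/-!
The integrating factor `exp (∫ α)` turns `Y' + α Y ≤ 0` into the Grönwall bound
`Y b ≤ Y a * exp (-∫ₐᵇ α)` for `0 ≤ a ≤ b`. Over a full window of length `T` starting after `t*`
this gives a factor `e^{-β}`; inside a window `∫ α ≥ -∫ max (-α) 0 ≥ -M`, so `Y` grows by at most
`e^M`. Chaining `⌊(t - t*) / T⌋` full windows and one partial window gives the estimate.
-/

open MeasureTheory Set Filter Real

theorem LipschitzOnWith.comp_absolutelyContinuousOnInterval {X Z : Type*}
    [PseudoMetricSpace X] [PseudoMetricSpace Z] {g : X → Z} {f : ℝ → X} {K : NNReal} {s : Set X}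
    {a b : ℝ} (hg : LipschitzOnWith K g s) (hf : AbsolutelyContinuousOnInterval f a b)
    (hfs : MapsTo f (uIcc a b) s) : AbsolutelyContinuousOnInterval (g ∘ f) a b := by
  have hKf := (mul_zero (K : ℝ)) ▸ Tendsto.const_mul (K : ℝ) hf
  refine squeeze_zero' (Eventually.of_forall fun _ ↦ Finset.sum_nonneg fun _ _ ↦ dist_nonneg)
    ?_ hKf
  filter_upwards [mem_inf_of_right (mem_principal_self _)] with E hE
  rw [Finset.mul_sum]
  exact Finset.sum_le_sum fun i hi ↦
    hg.dist_le_mul _ (hfs (hE.1 i hi).1) _ (hfs (hE.1 i hi).2)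

theorem ContDiff.comp_absolutelyContinuousOnInterval {g f : ℝ → ℝ} {a b : ℝ}
    (hg : ContDiff ℝ 1 g) (hf : AbsolutelyContinuousOnInterval f a b) :
    AbsolutelyContinuousOnInterval (g ∘ f) a b := by
  obtain ⟨C, hC⟩ := hf.exists_bound
  obtain ⟨K, hK⟩ := hg.contDiffOn.exists_lipschitzOnWith one_ne_zero (convex_Icc (-C) C)
    isCompact_Icc
  exact hK.comp_absolutelyContinuousOnInterval hf fun x hx ↦ abs_le.1 (hC x hx)

namespace AbsolutelyContinuousOnInterval

theorem le_of_ae_deriv_nonpos {f : ℝ → ℝ} {a b : ℝ} (hab : a ≤ b)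
    (hf : AbsolutelyContinuousOnInterval f a b) (h : ∀ᵐ x, x ∈ Ioc a b → deriv f x ≤ 0) :
    f b ≤ f a := by
  have hint : ∫ x in a..b, deriv f x ≤ 0 := by
    rw [intervalIntegral.integral_of_le hab]
    exact integral_nonpos_of_ae ((ae_restrict_iff' measurableSet_Ioc).2 h)
  linarith [hf.integral_deriv_eq_sub]

theorem le_mul_exp_neg_integral {Y α : ℝ → ℝ} {a b : ℝ} (hab : a ≤ b)
    (hY : AbsolutelyContinuousOnInterval Y a b) (hα : IntervalIntegrable α volume a b)
    (h : ∀ᵐ x, x ∈ uIcc a b → deriv Y x + α x * Y x ≤ 0) :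
    Y b ≤ Y a * exp (-∫ x in a..b, α x) := by
  set A : ℝ → ℝ := fun x ↦ ∫ t in a..x, α t
  have hE : AbsolutelyContinuousOnInterval (exp ∘ A) a b :=
    contDiff_exp.comp_absolutelyContinuousOnInterval
      (hα.absolutelyContinuousOnInterval_intervalIntegral left_mem_uIcc)
  -- integrating factor: `Y * exp A` has derivative `(Y' + α Y) exp A ≤ 0`
  have hmono : Y b * exp (A b) ≤ Y a * exp (A a) := by
    refine le_of_ae_deriv_nonpos hab (hY.fun_mul hE) ?_
    filter_upwards [hY.ae_differentiableAt, hα.ae_hasDerivAt_integral, h]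
      with x hYx hAx hx hxI
    have hxI' : x ∈ uIcc a b := by rw [uIcc_of_le hab]; exact Ioc_subset_Icc_self hxI
    have hd : HasDerivAt (fun x ↦ Y x * exp (A x))
        (deriv Y x * exp (A x) + Y x * (exp (A x) * α x)) x :=
      (hYx hxI').hasDerivAt.mul (hAx hxI' a left_mem_uIcc).exp
    show deriv (fun x ↦ Y x * exp (A x)) x ≤ 0
    rw [hd.deriv]
    nlinarith [hx hxI', exp_pos (A x)]
  calc Y b = Y b * exp (A b) * exp (-A b) := by
        rw [mul_assoc, ← exp_add, add_neg_cancel, exp_zero, mul_one]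
    _ ≤ Y a * exp (-A b) := by simpa [A] using mul_le_mul_of_nonneg_right hmono (exp_pos _).le

end AbsolutelyContinuousOnInterval

theorem neg_integral_max_neg_zero_le_integral {α : ℝ → ℝ} {a b t : ℝ}
    (hα : IntervalIntegrable α volume a b) (ht : t ∈ Icc a b) :
    -∫ s in a..b, max (-α s) 0 ≤ ∫ s in a..t, α s := by
  have hαt : IntervalIntegrable α volume a t := hα.mono_set (by
    rw [uIcc_of_le ht.1, uIcc_of_le (ht.1.trans ht.2)]; exact Icc_subset_Icc_right ht.2)
  have hnegPart {c d : ℝ} (h : IntervalIntegrable α volume c d) :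
      IntervalIntegrable (fun s ↦ max (-α s) 0) volume c d :=
    ⟨h.1.neg.pos_part, h.2.neg.pos_part⟩
  calc -∫ s in a..b, max (-α s) 0
      ≤ -∫ s in a..t, max (-α s) 0 := neg_le_neg <|
        intervalIntegral.integral_mono_interval le_rfl ht.1 ht.2
          (Eventually.of_forall fun _ ↦ le_max_right _ _) (hnegPart hα)
    _ = ∫ s in a..t, -max (-α s) 0 := intervalIntegral.integral_neg.symm
    _ ≤ ∫ s in a..t, α s := intervalIntegral.integral_mono_on ht.1
        (hnegPart hαt).neg hαt fun s _ ↦ neg_le.1 (le_max_left _ _)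

theorem le_mul_exp_neg_integral_of_eq_add_integral {Y Y' α : ℝ → ℝ} {a b : ℝ} (ha : 0 ≤ a)
    (hab : a ≤ b) (hY' : IntervalIntegrable Y' volume 0 b)
    (hY : ∀ t, 0 ≤ t → Y t = Y 0 + ∫ s in (0 : ℝ)..t, Y' s)
    (hα : IntervalIntegrable α volume a b)
    (h : ∀ᵐ t, 0 ≤ t → Y' t + α t * Y t ≤ 0) :
    Y b ≤ Y a * exp (-∫ t in a..b, α t) := by
  -- `Y` is only pinned down on `[0, ∞)`; `F` agrees with it there and is absolutely continuous
  set F : ℝ → ℝ := fun t ↦ Y 0 + ∫ s in (0 : ℝ)..t, Y' s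
  have hsub : uIcc a b ⊆ uIcc 0 b := by
    rw [uIcc_of_le hab, uIcc_of_le (ha.trans hab)]; exact Icc_subset_Icc_left ha
  have hF : AbsolutelyContinuousOnInterval F a b :=
    ((LipschitzWith.const (Y 0)).lipschitzOnWith.absolutelyContinuousOnInterval.fun_add
      (hY'.absolutelyContinuousOnInterval_intervalIntegral left_mem_uIcc)).mono hsub
  have hFY : ∀ t, 0 ≤ t → F t = Y t := fun t ht ↦ (hY t ht).symm
  have h0 : ∀ t ∈ uIcc a b, 0 ≤ t := fun t ht ↦ ha.trans (uIcc_of_le hab ▸ ht).1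
  rw [← hFY a ha, ← hFY b (ha.trans hab)]
  refine hF.le_mul_exp_neg_integral hab hα ?_
  filter_upwards [hY'.ae_hasDerivAt_integral, h] with t hder ht htI
  rw [((hder (hsub htI) 0 left_mem_uIcc).const_add (Y 0)).deriv, hFY t (h0 t htI)]
  exact ht (h0 t htI)

theorem le_mul_exp_neg_nat_mul_of_step {f : ℝ → ℝ} {T β t₀ : ℝ} (hT : 0 ≤ T)
    (hstep : ∀ u, t₀ ≤ u → f (u + T) ≤ f u * exp (-β)) (n : ℕ) :
    f (t₀ + n * T) ≤ f t₀ * exp (-(n * β)) := by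
  induction n with
  | zero => simp
  | succ n ih =>
    calc f (t₀ + (n + 1 : ℕ) * T) = f (t₀ + n * T + T) := by push_cast; ring_nf
      _ ≤ f (t₀ + n * T) * exp (-β) := hstep _ (le_add_of_nonneg_right (by positivity))
      _ ≤ f t₀ * exp (-(n * β)) * exp (-β) := by gcongr
      _ = f t₀ * exp (-((n + 1 : ℕ) * β)) := by rw [mul_assoc, ← exp_add]; push_cast; ring_nf

theorem le_mul_exp_of_step_of_le_on_window {f : ℝ → ℝ} {T β M t₀ : ℝ} (hT : 0 < T)
    (hβ : 0 ≤ β) (hf₀ : 0 ≤ f t₀)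
    (hstep : ∀ u, t₀ ≤ u → f (u + T) ≤ f u * exp (-β))
    (hwindow : ∀ u, t₀ ≤ u → ∀ t ∈ Icc u (u + T), f t ≤ f u * exp M) (t : ℝ) (ht : t₀ ≤ t) :
    f t ≤ f t₀ * exp (β + M) * exp (-(β / T) * (t - t₀)) := by
  set n := ⌊(t - t₀) / T⌋₊
  have hn : n * T ≤ t - t₀ := (le_div_iff₀ hT).1 (Nat.floor_le (by bound))
  have hn' : t - t₀ < (n + 1) * T := (div_lt_iff₀ hT).1 (Nat.lt_floor_add_one _)
  have hrate : β / T * (t - t₀) ≤ (n + 1) * β := by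
    rw [div_mul_eq_mul_div, div_le_iff₀ hT]; nlinarith
  calc f t ≤ f (t₀ + n * T) * exp M :=
        hwindow _ (le_add_of_nonneg_right (by positivity)) t ⟨by linarith, by linarith⟩
    _ ≤ f t₀ * exp (-(n * β)) * exp M := by
        gcongr; exact le_mul_exp_neg_nat_mul_of_step hT.le hstep n
    _ ≤ f t₀ * exp (β + M) * exp (-(β / T) * (t - t₀)) := by
        rw [mul_assoc, mul_assoc, ← exp_add, ← exp_add]
        exact mul_le_mul_of_nonneg_left (exp_le_exp.2 (by linarith)) hf₀

theorem exp_decay_from_averaged_coercivity_general (Y Y' α : ℝ → ℝ)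
    (hY_nn : ∀ t, 0 ≤ t → 0 ≤ Y t)
    (hY'int : ∀ b, IntegrableOn Y' (Set.Icc 0 b))
    (hYAC : ∀ t, 0 ≤ t → Y t = Y 0 + ∫ s in (0 : ℝ)..t, Y' s)
    (hαint : ∀ b, IntegrableOn α (Set.Icc 0 b))
    (hineq : ∀ᵐ t ∂(volume : Measure ℝ), 0 ≤ t → Y' t + α t * Y t ≤ 0)
    (T β M tstar : ℝ) (hT : 0 < T) (hβ : 0 < β) (htstar : 0 ≤ tstar)
    (hcoer : ∀ t, tstar ≤ t → β ≤ ∫ s in t..(t + T), α s)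
    (hneg : ∀ t, tstar ≤ t → (∫ s in t..(t + T), max (-α s) 0) ≤ M) :
    ∀ t, tstar ≤ t →
      Y t ≤ Y tstar * Real.exp (β + M) * Real.exp (-(β / T) * (t - tstar)) := by
  have hlocal {f : ℝ → ℝ} (hf : ∀ b, IntegrableOn f (Icc 0 b)) {a b : ℝ} (ha : 0 ≤ a)
      (hab : a ≤ b) : IntervalIntegrable f volume a b :=
    ((hf b).mono_set (uIcc_of_le hab ▸ Icc_subset_Icc_left ha)).intervalIntegrable
  have gronwall {a b : ℝ} (ha : 0 ≤ a) (hab : a ≤ b) : Y b ≤ Y a * exp (-∫ t in a..b, α t) :=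
    le_mul_exp_neg_integral_of_eq_add_integral ha hab (hlocal hY'int le_rfl (ha.trans hab)) hYAC
      (hlocal hαint ha hab) hineq
  refine le_mul_exp_of_step_of_le_on_window hT hβ.le (hY_nn _ htstar) (fun u hu ↦ ?_)
    (fun u hu t ht ↦ ?_)
  · have hu0 := htstar.trans hu
    calc Y (u + T) ≤ Y u * exp (-∫ t in u..(u + T), α t) := gronwall hu0 (by linarith)
      _ ≤ Y u * exp (-β) := by gcongr; exacts [hY_nn u hu0, hcoer u hu]
  · have hu0 := htstar.trans hu
    have hα := hlocal hαint hu0 (ht.1.trans ht.2)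
    calc Y t ≤ Y u * exp (-∫ t in u..t, α t) := gronwall hu0 ht.1
      _ ≤ Y u * exp M := by
        gcongr
        · exact hY_nn u hu0
        · linarith [neg_integral_max_neg_zero_le_integral hα ht, hneg u hu]

/-- **Exponential decay from averaged coercivity.** Let `Y : [0,∞) → [0,∞)` be absolutely
continuous on compact intervals (encoded via the fundamental theorem of calculus:
`Y t = Y 0 + ∫₀ᵗ Y'` with `Y'` locally integrable) and let `α` be locally integrable on
`[0,∞)` with `Y'(t) + α(t) Y(t) ≤ 0` for a.e. `t ≥ 0`. Suppose there exist `T > 0`,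
`β > 0`, `M ≥ 0` and `t* ≥ 0` such that for every `t ≥ t*`:
`∫_t^{t+T} α ≥ β` and `∫_t^{t+T} max(−α, 0) ≤ M`. Then for all `t ≥ t*`,
`Y(t) ≤ Y(t*) e^{β+M} e^{−(β/T)(t−t*)}`. -/
theorem exp_decay_from_averaged_coercivity (Y Y' α : ℝ → ℝ)
    (hY_nn : ∀ t, 0 ≤ t → 0 ≤ Y t)
    (hY'int : ∀ b, IntegrableOn Y' (Set.Icc 0 b))
    (hYAC : ∀ t, 0 ≤ t → Y t = Y 0 + ∫ s in (0 : ℝ)..t, Y' s)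
    (hαint : ∀ b, IntegrableOn α (Set.Icc 0 b))
    (hineq : ∀ᵐ t ∂(volume : Measure ℝ), 0 ≤ t → Y' t + α t * Y t ≤ 0)
    (T β M tstar : ℝ) (hT : 0 < T) (hβ : 0 < β) (hM : 0 ≤ M) (htstar : 0 ≤ tstar)
    (hcoer : ∀ t, tstar ≤ t → β ≤ ∫ s in t..(t + T), α s)
    (hneg : ∀ t, tstar ≤ t → (∫ s in t..(t + T), max (-α s) 0) ≤ M) :
    ∀ t, tstar ≤ t →
      Y t ≤ Y tstar * Real.exp (β + M) * Real.exp (-(β / T) * (t - tstar)) :=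
  exp_decay_from_averaged_coercivity_general Y Y' α hY_nn hY'int hYAC hαint hineq T β M tstar hT hβ
    htstar hcoer hneg
end
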